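/- Let u_a, u_b ∈ ℝ with u_a < u_b, and let ρ > 0 satisfy ρ² ≥ 1/(u_b − u_a). Then for every x ∈ ℝ, the penalized multipliers satisfy max_ρ(ρ(u_a − x)) · max_ρ(ρ(x − u_b)) = 0; that is, the two multipliers λ^a_ρ(x) := max_ρ(ρ(u_a − x)) and λ^b_ρ(x) := max_ρ(ρ(x − u_b)) have disjoint supports. -/
import Mathlib


noncomputable def maxRho (ρ x : ℝ) : ℝ :=
  if 1 / (2 * ρ) ≤ |x| then max 0 x else (ρ / 2) * (x + 1 / (2 * ρ)) ^ 2

lemma maxRho_zero (ρ y : ℝ) (hρ : 0 < ρ) (h : y ≤ -(1 / (2 * ρ))) : maxRho ρ y = 0 := by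
  have h2 : 0 < 1 / (2 * ρ) := by positivity
  have hy : y ≤ 0 := h.trans (by linarith)
  have habs : 1 / (2 * ρ) ≤ |y| := by
    rw [abs_of_nonpos hy]; linarith
  rw [maxRho, if_pos habs]
  exact max_eq_left hy

theorem multipliers_disjoint_support (ρ ua ub : ℝ) (hρ : 0 < ρ) (hab : ua < ub)
    (hρ2 : ρ ^ 2 ≥ 1 / (ub - ua)) (x : ℝ) :
    maxRho ρ (ρ * (ua - x)) * maxRho ρ (ρ * (x - ub)) = 0 := by
  have hd : 0 < ub - ua := by linarith
  have h1 : 1 ≤ ρ ^ 2 * (ub - ua) := (div_le_iff₀ hd).mp hρ2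
  have key : 1 / ρ ^ 2 ≤ ub - ua := by
    rw [div_le_iff₀ (by positivity)]; nlinarith
  rcases le_or_gt (ρ * (ua - x)) (-(1 / (2 * ρ))) with h | h
  · rw [maxRho_zero ρ _ hρ h, zero_mul]
  · have e1 : ρ * (1 / ρ ^ 2) = 2 * (1 / (2 * ρ)) := by field_simp
    have e3 : ρ * (1 / ρ ^ 2) ≤ ρ * (ub - ua) := by
      exact mul_le_mul_of_nonneg_left key hρ.le
    have h2 : ρ * (x - ub) ≤ -(1 / (2 * ρ)) := by nlinarith
    rw [maxRho_zero ρ _ hρ h2, mul_zero]
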